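/- Any system with exactly two contents q1 and q2 and three contexts — a context c0 in which both q1 and q2 are measured, a context c1 in which only q1 is measured, and a context c2 in which only q2 is measured — with finite value sets and arbitrary context distributions, is CbD-noncontextual: it admits a multimaximally connected coupling. (In particular, every factual–counterfactual subsystem of a cyclic system of rank 3 is noncontextual, so every such cyclic system satisfies generalized counterfactual definiteness even when it is contextual.) -/

import Mathlib

open Finset

/-- A probability distribution on a finite type, given by a real-valued mass function:
nonnegative and summing to one. -/
def IsDist {α : Type} [Fintype α] (d : α → ℝ) : Prop :=
  (∀ a, 0 ≤ d a) ∧ ∑ a, d a = 1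

/-- The pushforward (marginal) of a mass function along a map. -/
def margin {α β : Type} [Fintype α] [DecidableEq β] (d : α → ℝ) (f : α → β) : β → ℝ :=
  fun b => ∑ a ∈ univ.filter (fun a => f a = b), d a

/-- `γ` is a coupling of the system `(μ c)_{c ∈ C}`: a probability measure on the product
over all pairs `(q, c)` with `q ≺ c` of `V q`, whose marginal on the coordinates of each
context `c` equals `μ c`. -/
def IsCoupling {Q C : Type} [Fintype Q] [DecidableEq Q] [Fintype C] [DecidableEq C]
    (mea : Q → C → Bool) (V : Q → Type) [∀ q, Fintype (V q)] [∀ q, DecidableEq (V q)]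
    (μ : ∀ c : C, (∀ q : {q : Q // mea q c}, V q.1) → ℝ)
    (γ : (∀ p : {p : Q × C // mea p.1 p.2}, V p.1.1) → ℝ) : Prop :=
  IsDist γ ∧
  ∀ c : C, margin γ (fun x (q : {q : Q // mea q c}) => x ⟨(q.1, c), q.2⟩) = μ c

/-- `γ` is multimaximally connected: for every content `q` and contexts `c, c'` in which
`q` is measured, the `γ`-probability that the `(q, c)`-coordinate equals the
`(q, c')`-coordinate is the greatest diagonal probability over all couplings of the
`q`-marginal of `μ c` with the `q`-marginal of `μ c'`. -/
def IsMultimaximal {Q C : Type} [Fintype Q] [DecidableEq Q] [Fintype C] [DecidableEq C]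
    (mea : Q → C → Bool) (V : Q → Type) [∀ q, Fintype (V q)] [∀ q, DecidableEq (V q)]
    (μ : ∀ c : C, (∀ q : {q : Q // mea q c}, V q.1) → ℝ)
    (γ : (∀ p : {p : Q × C // mea p.1 p.2}, V p.1.1) → ℝ) : Prop :=
  ∀ (q : Q) (c c' : C) (h : mea q c) (h' : mea q c'),
    IsGreatest
      {r : ℝ | ∃ ν : V q × V q → ℝ, IsDist ν ∧
          margin ν Prod.fst = margin (μ c) (fun x => x ⟨q, h⟩) ∧
          margin ν Prod.snd = margin (μ c') (fun x => x ⟨q, h'⟩) ∧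
          r = ∑ v : V q, ν (v, v)}
      (∑ x ∈ univ.filter
          (fun x : ∀ p : {p : Q × C // mea p.1 p.2}, V p.1.1 =>
            x ⟨(q, c), h⟩ = x ⟨(q, c'), h'⟩), γ x)

/-- A system is CbD-noncontextual if it has a multimaximally connected coupling. -/
def CbDNoncontextual {Q C : Type} [Fintype Q] [DecidableEq Q] [Fintype C] [DecidableEq C]
    (mea : Q → C → Bool) (V : Q → Type) [∀ q, Fintype (V q)] [∀ q, DecidableEq (V q)]
    (μ : ∀ c : C, (∀ q : {q : Q // mea q c}, V q.1) → ℝ) : Prop :=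
  ∃ γ, IsCoupling mea V μ γ ∧ IsMultimaximal mea V μ γ


/-- Measurement relation for a system with two contents `0, 1` (i.e., `q₁, q₂`) and three
contexts: context `0` measures both contents, context `1` measures only content `0`, and
context `2` measures only content `1`. -/
def mea3 (q : Fin 2) (c : Fin 3) : Bool :=
  c == 0 || (c == 1 && q == 0) || (c == 2 && q == 1)

/-! The coupling is built by gluing. Keep the joint law of `(q₁, q₂)` in context `c₀`; attach
the `c₁`-copy of `q₁` to the `c₀`-copy through the classical maximal coupling of their
marginals, and the `c₂`-copy of `q₂` to its `c₀`-copy likewise, each new coordinate drawn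
conditionally independently of everything else given the copy it is attached to. Each context
law is then a marginal of the result, the two nontrivial connections attain the maximal
diagonal probability `∑ min (p v) (q v)`, and the remaining connections pair a coordinate with
itself. Gluing works because the connections form a tree: no cycle of constraints has to be
closed. -/

section Margin

variable {α β γ : Type} [Fintype α]

lemma margin_apply [DecidableEq β] (d : α → ℝ) (f : α → β) (b : β) :
    margin d f b = ∑ a, if f a = b then d a else 0 :=
  sum_filter _ _

lemma sum_margin [Fintype β] [DecidableEq β] (d : α → ℝ) (f : α → β) :
    ∑ b, margin d f b = ∑ a, d a :=
  sum_fiberwise univ f d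

lemma isDist_margin [Fintype β] [DecidableEq β] {d : α → ℝ} (hd : IsDist d) (f : α → β) :
    IsDist (margin d f) :=
  ⟨fun _ => sum_nonneg fun a _ => hd.1 a, by rw [sum_margin, hd.2]⟩

lemma le_margin_apply [DecidableEq β] {d : α → ℝ} (hd : ∀ a, 0 ≤ d a) (f : α → β)
    (a : α) :
    d a ≤ margin d f (f a) :=
  single_le_sum (fun a' _ => hd a') (by simp)

lemma sum_filter_margin [Fintype β] [DecidableEq β] (d : α → ℝ) (f : α → β)
    (P : β → Prop) [DecidablePred P] :
    ∑ b ∈ univ.filter P, margin d f b = ∑ a ∈ univ.filter (fun a => P (f a)), d a := by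
  rw [← sum_fiberwise_of_maps_to (s := univ.filter fun a => P (f a)) (t := univ.filter P)
    (g := f) (by simp)]
  refine sum_congr rfl fun b hb => ?_
  rw [filter_filter, margin]
  exact sum_congr (filter_congr fun a _ => by grind [mem_filter.1 hb]) fun _ _ => rfl

lemma margin_margin [Fintype β] [DecidableEq β] [DecidableEq γ] (d : α → ℝ) (f : α → β)
    (g : β → γ) :
    margin (margin d f) g = margin d (g ∘ f) :=
  funext fun c => sum_filter_margin d f (g · = c)

lemma margin_margin_of_leftInverse [Fintype β] [DecidableEq β] [DecidableEq α] (d : α → ℝ)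
    {f : α → β} {g : β → α} (h : Function.LeftInverse g f) : margin (margin d f) g = d := by
  rw [margin_margin, h.comp_eq_id]
  funext a
  simp [margin, filter_eq']

lemma margin_comp_eq_of_leftInverse [Fintype β] [DecidableEq β] [Fintype γ] [DecidableEq γ]
    {d : α → ℝ} {e : γ → ℝ} {π : α → β} {r : γ → β} {k : β → γ}
    (hπ : margin d π = margin e r) (hk : Function.LeftInverse k r) : margin d (k ∘ π) = e := by
  rw [← margin_margin, hπ, margin_margin_of_leftInverse _ hk]

lemma margin_fst_apply [Fintype β] [DecidableEq α] (d : α × β → ℝ) (a : α) :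
    margin d Prod.fst a = ∑ b, d (a, b) := by
  rw [margin_apply, Fintype.sum_prod_type, sum_comm]
  simp

lemma margin_snd_apply [Fintype β] [DecidableEq β] (d : α × β → ℝ) (b : β) :
    margin d Prod.snd b = ∑ a, d (a, b) := by
  simp [margin_apply, Fintype.sum_prod_type]

lemma sum_filter_fst_eq_snd [DecidableEq α] (ν : α × α → ℝ) :
    ∑ x ∈ univ.filter (fun x : α × α => x.1 = x.2), ν x = ∑ a, ν (a, a) := by
  simp [sum_filter, Fintype.sum_prod_type]

end Margin

section MaximalCoupling

variable {α : Type} [Fintype α] {p q : α → ℝ}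

/-- One minus the total variation distance of `p` and `q`. -/
noncomputable def overlap (p q : α → ℝ) : ℝ := ∑ a, min (p a) (q a)

lemma overlap_comm (p q : α → ℝ) : overlap p q = overlap q p := by
  simp only [overlap, min_comm]

lemma overlap_self (hp : IsDist p) : overlap p p = 1 := by
  simp only [overlap, min_self, hp.2]

/-- The classical maximal coupling: put `min (p a) (q a)` on the diagonal and couple the
remainders `p - min p q` and `q - min p q`, both of mass `1 - overlap p q`, independently.
The remainders have disjoint supports, so the second part puts no mass on the diagonal; when
`overlap p q = 1` it divides by zero, but then both remainders vanish. -/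
noncomputable def maxCoupling [DecidableEq α] (p q : α → ℝ) (x : α × α) : ℝ :=
  (if x.1 = x.2 then min (p x.1) (q x.1) else 0) +
    (p x.1 - min (p x.1) (q x.1)) * (q x.2 - min (p x.2) (q x.2)) / (1 - overlap p q)

lemma maxCoupling_swap [DecidableEq α] (p q : α → ℝ) (x : α × α) :
    maxCoupling q p x.swap = maxCoupling p q x := by
  obtain ⟨a, b⟩ := x
  by_cases hab : a = b
  · subst hab
    simp [maxCoupling, overlap_comm q p, min_comm (q a), mul_comm]
  · simp [maxCoupling, hab, Ne.symm hab, overlap_comm q p, min_comm (q _), mul_comm]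

lemma sum_sub_min_eq (hp : IsDist p) : ∑ a, (p a - min (p a) (q a)) = 1 - overlap p q := by
  rw [sum_sub_distrib, hp.2, overlap]

lemma sub_min_eq_zero_of_overlap (hp : IsDist p) (h : 1 - overlap p q = 0) (a : α) :
    p a - min (p a) (q a) = 0 :=
  (sum_eq_zero_iff_of_nonneg fun _ _ => sub_nonneg.2 (min_le_left _ _)).1
    ((sum_sub_min_eq hp).trans h) a (mem_univ a)

lemma maxCoupling_nonneg [DecidableEq α] (hp : IsDist p) (hq : IsDist q) (x : α × α) :
    0 ≤ maxCoupling p q x := by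
  have hle : overlap p q ≤ 1 := hp.2 ▸ sum_le_sum fun a _ => min_le_left _ _
  refine add_nonneg ?_ (div_nonneg (mul_nonneg ?_ ?_) (by linarith))
  · split_ifs
    exacts [le_min (hp.1 _) (hq.1 _), le_rfl]
  · exact sub_nonneg.2 (min_le_left _ _)
  · exact sub_nonneg.2 (min_le_right _ _)

lemma margin_maxCoupling_fst [DecidableEq α] (hp : IsDist p) (hq : IsDist q) :
    margin (maxCoupling p q) Prod.fst = p := by
  funext a
  rw [margin_fst_apply]
  simp only [maxCoupling, sum_add_distrib, sum_ite_eq, mem_univ, if_true, ← sum_div,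
    ← mul_sum]
  have hres : ∑ b, (q b - min (p b) (q b)) = 1 - overlap p q := by
    rw [sum_sub_distrib, hq.2, overlap]
  rw [hres, mul_div_cancel_of_imp fun h => sub_min_eq_zero_of_overlap hp h a, add_sub_cancel]

lemma margin_maxCoupling_snd [DecidableEq α] (hp : IsDist p) (hq : IsDist q) :
    margin (maxCoupling p q) Prod.snd = q := by
  funext b
  calc margin (maxCoupling p q) Prod.snd b = ∑ a, maxCoupling q p (b, a) := by
        rw [margin_snd_apply]
        exact sum_congr rfl fun a _ => (maxCoupling_swap p q (a, b)).symm
    _ = q b := by rw [← margin_fst_apply, margin_maxCoupling_fst hq hp]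

lemma isDist_maxCoupling [DecidableEq α] (hp : IsDist p) (hq : IsDist q) :
    IsDist (maxCoupling p q) :=
  ⟨maxCoupling_nonneg hp hq, by
    rw [← sum_margin _ Prod.fst, margin_maxCoupling_fst hp hq, hp.2]⟩

lemma sum_maxCoupling_diag [DecidableEq α] (p q : α → ℝ) :
    ∑ a, maxCoupling p q (a, a) = overlap p q := by
  have hdisjoint : ∀ a, (p a - min (p a) (q a)) * (q a - min (p a) (q a)) = 0 := fun a => by
    rcases min_choice (p a) (q a) with h | h <;> simp [h]
  simp [maxCoupling, hdisjoint, overlap]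

lemma sum_diag_le_overlap [DecidableEq α] {ν : α × α → ℝ} (hν : ∀ x, 0 ≤ ν x)
    (h₁ : margin ν Prod.fst = p) (h₂ : margin ν Prod.snd = q) :
    ∑ a, ν (a, a) ≤ overlap p q :=
  sum_le_sum fun a _ => le_min (h₁ ▸ le_margin_apply hν Prod.fst (a, a))
    (h₂ ▸ le_margin_apply hν Prod.snd (a, a))

theorem isGreatest_overlap [DecidableEq α] (hp : IsDist p) (hq : IsDist q) :
    IsGreatest {r | ∃ ν : α × α → ℝ, IsDist ν ∧ margin ν Prod.fst = p ∧
      margin ν Prod.snd = q ∧ r = ∑ a, ν (a, a)} (overlap p q) :=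
  ⟨⟨maxCoupling p q, isDist_maxCoupling hp hq, margin_maxCoupling_fst hp hq,
      margin_maxCoupling_snd hp hq, (sum_maxCoupling_diag p q).symm⟩,
    fun _ ⟨_, hν, h₁, h₂, hr⟩ => hr ▸ sum_diag_le_overlap hν.1 h₁ h₂⟩

end MaximalCoupling

section Gluing

variable {X α γ : Type} [Fintype α] [DecidableEq α] [Fintype γ]
  {d : X → ℝ} {f : X → α} {e : α × γ → ℝ}

/-- Draws the `γ`-coordinate from the conditional law of `e` given `f`, independently of the
rest of `X`. Where `margin e Prod.fst (f x) = 0` the division yields `0`, harmless since then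
`d x = 0` as soon as `d` and `e` have the same marginal on `α`. -/
noncomputable def glue (d : X → ℝ) (f : X → α) (e : α × γ → ℝ) (y : X × γ) : ℝ :=
  d y.1 * e (f y.1, y.2) / margin e Prod.fst (f y.1)

lemma glue_nonneg (hd : ∀ x, 0 ≤ d x) (he : ∀ z, 0 ≤ e z) (y : X × γ) :
    0 ≤ glue d f e y :=
  div_nonneg (mul_nonneg (hd _) (he _)) (sum_nonneg fun z _ => he z)

lemma margin_glue_fst [Fintype X] [DecidableEq X] (hd : ∀ x, 0 ≤ d x)
    (hf : margin d f = margin e Prod.fst) :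
    margin (glue d f e) Prod.fst = d := by
  funext x
  rw [margin_fst_apply]
  simp only [glue, ← sum_div, ← mul_sum, ← margin_fst_apply, ← hf]
  exact mul_div_cancel_of_imp fun h => le_antisymm (h ▸ le_margin_apply hd f x) (hd x)

lemma margin_glue_map [Fintype X] [DecidableEq γ] (he : ∀ z, 0 ≤ e z)
    (hf : margin d f = margin e Prod.fst) :
    margin (glue d f e) (Prod.map f id) = e := by
  funext ⟨a, c⟩
  calc margin (glue d f e) (Prod.map f id) (a, c)
      = ∑ x ∈ univ.filter (f · = a), d x * (e (a, c) / margin e Prod.fst a) := by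
        rw [margin_apply, Fintype.sum_prod_type, sum_filter]
        refine sum_congr rfl fun x _ => ?_
        simp only [Prod.map, id, Prod.mk.injEq, ite_and]
        split_ifs with h
        · simp [glue, h, mul_div_assoc]
        · simp
    _ = e (a, c) := by
        rw [← sum_mul, ← margin, hf]
        exact mul_div_cancel_of_imp' fun h =>
          le_antisymm (h ▸ le_margin_apply he Prod.fst (a, c)) (he _)

lemma margin_glue_comp_fst [Fintype X] [DecidableEq X] {β : Type} [DecidableEq β]
    (hd : ∀ x, 0 ≤ d x) (hf : margin d f = margin e Prod.fst) (g : X → β) :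
    margin (glue d f e) (fun y => g y.1) = margin d g :=
  (margin_margin _ _ _).symm.trans (by rw [margin_glue_fst hd hf])

lemma isDist_glue [Fintype X] [DecidableEq X] (hd : IsDist d) (he : ∀ z, 0 ≤ e z)
    (hf : margin d f = margin e Prod.fst) :
    IsDist (glue d f e) :=
  ⟨glue_nonneg hd.1 he, by rw [← sum_margin _ Prod.fst, margin_glue_fst hd.1 hf, hd.2]⟩

end Gluing

section MaxGlue

variable {α β : Type} [Fintype α] [DecidableEq α] [Fintype β] [DecidableEq β]
  {m : α × β → ℝ} {p : α → ℝ} {q : β → ℝ}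

noncomputable def maxGlue (m : α × β → ℝ) (p : α → ℝ) (q : β → ℝ) :
    ((α × β) × α) × β → ℝ :=
  glue (glue m Prod.fst (maxCoupling (margin m Prod.fst) p)) (fun x => x.1.2)
    (maxCoupling (margin m Prod.snd) q)

lemma margin_glue_maxCoupling_snd (hm : IsDist m) (hp : IsDist p) (hq : IsDist q) :
    margin (glue m Prod.fst (maxCoupling (margin m Prod.fst) p)) (fun x => x.1.2) =
      margin (maxCoupling (margin m Prod.snd) q) Prod.fst := by
  rw [margin_glue_comp_fst hm.1 (margin_maxCoupling_fst (isDist_margin hm _) hp).symm,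
    margin_maxCoupling_fst (isDist_margin hm _) hq]

lemma isDist_maxGlue (hm : IsDist m) (hp : IsDist p) (hq : IsDist q) :
    IsDist (maxGlue m p q) :=
  isDist_glue
    (isDist_glue hm (maxCoupling_nonneg (isDist_margin hm _) hp)
      (margin_maxCoupling_fst (isDist_margin hm _) hp).symm)
    (maxCoupling_nonneg (isDist_margin hm _) hq) (margin_glue_maxCoupling_snd hm hp hq)

lemma margin_maxGlue_comp_fst {γ : Type} [DecidableEq γ] (hm : IsDist m) (hp : IsDist p)
    (hq : IsDist q) (g : (α × β) × α → γ) :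
    margin (maxGlue m p q) (fun y => g y.1) =
      margin (glue m Prod.fst (maxCoupling (margin m Prod.fst) p)) g :=
  margin_glue_comp_fst (glue_nonneg hm.1 (maxCoupling_nonneg (isDist_margin hm _) hp))
    (margin_glue_maxCoupling_snd hm hp hq) g

lemma margin_maxGlue_base (hm : IsDist m) (hp : IsDist p) (hq : IsDist q) :
    margin (maxGlue m p q) (fun y => y.1.1) = m := by
  rw [margin_maxGlue_comp_fst hm hp hq Prod.fst,
    margin_glue_fst hm.1 (margin_maxCoupling_fst (isDist_margin hm _) hp).symm]

lemma margin_maxGlue_left (hm : IsDist m) (hp : IsDist p) (hq : IsDist q) :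
    margin (maxGlue m p q) (fun y => (y.1.1.1, y.1.2)) = maxCoupling (margin m Prod.fst) p :=
  (margin_maxGlue_comp_fst hm hp hq (Prod.map Prod.fst id)).trans <|
    margin_glue_map (maxCoupling_nonneg (isDist_margin hm _) hp)
      (margin_maxCoupling_fst (isDist_margin hm _) hp).symm

lemma margin_maxGlue_right (hm : IsDist m) (hp : IsDist p) (hq : IsDist q) :
    margin (maxGlue m p q) (fun y => (y.1.1.2, y.2)) = maxCoupling (margin m Prod.snd) q :=
  margin_glue_map (maxCoupling_nonneg (isDist_margin hm _) hq)
    (margin_glue_maxCoupling_snd hm hp hq)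

lemma margin_maxGlue_mid (hm : IsDist m) (hp : IsDist p) (hq : IsDist q) :
    margin (maxGlue m p q) (fun y => y.1.2) = p :=
  (margin_margin (maxGlue m p q) (fun y => (y.1.1.1, y.1.2)) Prod.snd).symm.trans <| by
    rw [margin_maxGlue_left hm hp hq, margin_maxCoupling_snd (isDist_margin hm Prod.fst) hp]

lemma margin_maxGlue_last (hm : IsDist m) (hp : IsDist p) (hq : IsDist q) :
    margin (maxGlue m p q) Prod.snd = q :=
  (margin_margin (maxGlue m p q) (fun y => (y.1.1.2, y.2)) Prod.snd).symm.trans <| by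
    rw [margin_maxGlue_right hm hp hq, margin_maxCoupling_snd (isDist_margin hm Prod.snd) hq]

end MaxGlue

section Connection

variable {X α : Type} [Fintype X] [Fintype α] [DecidableEq α] {Γ : X → ℝ} {f g : X → α}

def IsMaximallyConnected (Γ : X → ℝ) (f g : X → α) : Prop :=
  ∑ x ∈ univ.filter (fun x => f x = g x), Γ x = overlap (margin Γ f) (margin Γ g)

lemma IsMaximallyConnected.symm (h : IsMaximallyConnected Γ f g) :
    IsMaximallyConnected Γ g f := by
  rw [IsMaximallyConnected, overlap_comm, ← h]
  simp only [eq_comm]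

lemma isMaximallyConnected_self (hΓ : IsDist Γ) (f : X → α) : IsMaximallyConnected Γ f f := by
  rw [IsMaximallyConnected, filter_true_of_mem fun _ _ => rfl, hΓ.2,
    overlap_self (isDist_margin hΓ f)]

lemma isMaximallyConnected_of_margin_eq_maxCoupling {p q : α → ℝ} (hp : IsDist p)
    (hq : IsDist q) (h : margin Γ (fun x => (f x, g x)) = maxCoupling p q) :
    IsMaximallyConnected Γ f g := by
  have hf : margin Γ f = p := by
    rw [← margin_maxCoupling_fst hp hq, ← h, margin_margin]
    rfl
  have hg : margin Γ g = q := by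
    rw [← margin_maxCoupling_snd hp hq, ← h, margin_margin]
    rfl
  rw [IsMaximallyConnected, hf, hg, ← sum_maxCoupling_diag, ← sum_filter_fst_eq_snd, ← h,
    sum_filter_margin]

lemma IsMaximallyConnected.isGreatest (h : IsMaximallyConnected Γ f g) (hΓ : IsDist Γ) :
    IsGreatest {r | ∃ ν : α × α → ℝ, IsDist ν ∧ margin ν Prod.fst = margin Γ f ∧
      margin ν Prod.snd = margin Γ g ∧ r = ∑ a, ν (a, a)}
      (∑ x ∈ univ.filter (fun x => f x = g x), Γ x) :=
  h ▸ isGreatest_overlap (isDist_margin hΓ f) (isDist_margin hΓ g)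

end Connection

lemma IsCoupling.margin_eval {Q C : Type} [Fintype Q] [DecidableEq Q] [Fintype C]
    [DecidableEq C] {mea : Q → C → Bool} {V : Q → Type} [∀ q, Fintype (V q)]
    [∀ q, DecidableEq (V q)] {μ : ∀ c : C, (∀ q : {q : Q // mea q c}, V q.1) → ℝ}
    {γ : (∀ p : {p : Q × C // mea p.1 p.2}, V p.1.1) → ℝ} (hγ : IsCoupling mea V μ γ)
    {q : Q} {c : C} (h : mea q c) :
    margin (μ c) (fun z => z ⟨q, h⟩) = margin γ (fun x => x ⟨(q, c), h⟩) := by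
  rw [← hγ.2 c, margin_margin]
  rfl

namespace TwoContentSystem

variable (V : Fin 2 → Type) [∀ q, Fintype (V q)] [∀ q, DecidableEq (V q)]
  (μ : ∀ c : Fin 3, (∀ q : {q : Fin 2 // mea3 q c}, V q.1) → ℝ)

abbrev Context (c : Fin 3) : Type := ∀ q : {q : Fin 2 // mea3 q c}, V q.1

abbrev Joint : Type := ∀ p : {p : Fin 2 × Fin 3 // mea3 p.1 p.2}, V p.1.1

def context0OfPair (v : V 0 × V 1) : Context V 0
  | ⟨0, _⟩ => v.1
  | ⟨1, _⟩ => v.2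

def context1OfValue (a : V 0) : Context V 1
  | ⟨0, _⟩ => a

def context2OfValue (b : V 1) : Context V 2
  | ⟨1, _⟩ => b

def jointOfTuple (y : ((V 0 × V 1) × V 0) × V 1) : Joint V
  | ⟨(0, 0), _⟩ => y.1.1.1
  | ⟨(1, 0), _⟩ => y.1.1.2
  | ⟨(0, 1), _⟩ => y.1.2
  | ⟨(1, 2), _⟩ => y.2
  | ⟨(0, 2), h⟩ => nomatch h

noncomputable def dist0 : V 0 × V 1 → ℝ :=
  margin (μ 0) fun z => (z ⟨0, rfl⟩, z ⟨1, rfl⟩)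

noncomputable def dist1 : V 0 → ℝ := margin (μ 1) fun z => z ⟨0, rfl⟩

noncomputable def dist2 : V 1 → ℝ := margin (μ 2) fun z => z ⟨1, rfl⟩

noncomputable def coupling : Joint V → ℝ :=
  margin (maxGlue (dist0 V μ) (dist1 V μ) (dist2 V μ)) (jointOfTuple V)

variable {V μ}

lemma isDist_dist0 (hdist : ∀ c, IsDist (μ c)) : IsDist (dist0 V μ) := isDist_margin (hdist 0) _

lemma isDist_dist1 (hdist : ∀ c, IsDist (μ c)) : IsDist (dist1 V μ) := isDist_margin (hdist 1) _

lemma isDist_dist2 (hdist : ∀ c, IsDist (μ c)) : IsDist (dist2 V μ) := isDist_margin (hdist 2) _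

lemma isDist_coupling (hdist : ∀ c, IsDist (μ c)) : IsDist (coupling V μ) :=
  isDist_margin (isDist_maxGlue (isDist_dist0 hdist) (isDist_dist1 hdist) (isDist_dist2 hdist)) _

lemma margin_coupling_eq_of_leftInverse {c : Fin 3} {β : Type} [Fintype β] [DecidableEq β]
    {π : ((V 0 × V 1) × V 0) × V 1 → β} {r : Context V c → β} {k : β → Context V c}
    (hres : ∀ y,
      (fun q : {q : Fin 2 // mea3 q c} => jointOfTuple V y ⟨(q.1, c), q.2⟩) = k (π y))
    (hπ : margin (maxGlue (dist0 V μ) (dist1 V μ) (dist2 V μ)) π = margin (μ c) r)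
    (hk : Function.LeftInverse k r) :
    margin (coupling V μ) (fun x (q : {q : Fin 2 // mea3 q c}) => x ⟨(q.1, c), q.2⟩) =
      μ c := by
  have hcomp : (fun (x : Joint V) (q : {q : Fin 2 // mea3 q c}) => x ⟨(q.1, c), q.2⟩) ∘
      jointOfTuple V = k ∘ π := funext hres
  rw [coupling, margin_margin, hcomp]
  exact margin_comp_eq_of_leftInverse hπ hk

lemma margin_coupling_context0 (hdist : ∀ c, IsDist (μ c)) :
    margin (coupling V μ) (fun x (q : {q : Fin 2 // mea3 q 0}) => x ⟨(q.1, 0), q.2⟩) = μ 0 :=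
  margin_coupling_eq_of_leftInverse (k := context0OfPair V)
    (fun y => funext fun ⟨q, h⟩ => by fin_cases q <;> rfl)
    (margin_maxGlue_base (isDist_dist0 hdist) (isDist_dist1 hdist) (isDist_dist2 hdist))
    (fun z => funext fun ⟨q, h⟩ => by fin_cases q <;> rfl)

lemma margin_coupling_context1 (hdist : ∀ c, IsDist (μ c)) :
    margin (coupling V μ) (fun x (q : {q : Fin 2 // mea3 q 1}) => x ⟨(q.1, 1), q.2⟩) = μ 1 :=
  margin_coupling_eq_of_leftInverse (k := context1OfValue V)
    (fun y => funext fun ⟨q, h⟩ => by fin_cases q <;> first | rfl | exact absurd h (by decide))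
    (margin_maxGlue_mid (isDist_dist0 hdist) (isDist_dist1 hdist) (isDist_dist2 hdist))
    (fun z => funext fun ⟨q, h⟩ => by fin_cases q <;> first | rfl | exact absurd h (by decide))

lemma margin_coupling_context2 (hdist : ∀ c, IsDist (μ c)) :
    margin (coupling V μ) (fun x (q : {q : Fin 2 // mea3 q 2}) => x ⟨(q.1, 2), q.2⟩) = μ 2 :=
  margin_coupling_eq_of_leftInverse (k := context2OfValue V)
    (fun y => funext fun ⟨q, h⟩ => by fin_cases q <;> first | rfl | exact absurd h (by decide))
    (margin_maxGlue_last (isDist_dist0 hdist) (isDist_dist1 hdist) (isDist_dist2 hdist))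
    (fun z => funext fun ⟨q, h⟩ => by fin_cases q <;> first | rfl | exact absurd h (by decide))

lemma isCoupling_coupling (hdist : ∀ c, IsDist (μ c)) :
    IsCoupling mea3 V μ (coupling V μ) := by
  refine ⟨isDist_coupling hdist, fun c => ?_⟩
  fin_cases c
  exacts [margin_coupling_context0 hdist, margin_coupling_context1 hdist,
    margin_coupling_context2 hdist]

lemma isMaximallyConnected_coupling_content0 (hdist : ∀ c, IsDist (μ c)) :
    IsMaximallyConnected (coupling V μ) (fun x => x ⟨(0, 0), rfl⟩)
      (fun x => x ⟨(0, 1), rfl⟩) :=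
  isMaximallyConnected_of_margin_eq_maxCoupling
    (isDist_margin (isDist_dist0 hdist) Prod.fst) (isDist_dist1 hdist)
    ((margin_margin _ _ _).trans (margin_maxGlue_left (isDist_dist0 hdist)
      (isDist_dist1 hdist) (isDist_dist2 hdist)))

lemma isMaximallyConnected_coupling_content1 (hdist : ∀ c, IsDist (μ c)) :
    IsMaximallyConnected (coupling V μ) (fun x => x ⟨(1, 0), rfl⟩)
      (fun x => x ⟨(1, 2), rfl⟩) :=
  isMaximallyConnected_of_margin_eq_maxCoupling
    (isDist_margin (isDist_dist0 hdist) Prod.snd) (isDist_dist2 hdist)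
    ((margin_margin _ _ _).trans (margin_maxGlue_right (isDist_dist0 hdist)
      (isDist_dist1 hdist) (isDist_dist2 hdist)))

lemma isMaximallyConnected_coupling (hdist : ∀ c, IsDist (μ c)) (q : Fin 2) (c c' : Fin 3)
    (h : mea3 q c) (h' : mea3 q c') :
    IsMaximallyConnected (coupling V μ) (fun x => x ⟨(q, c), h⟩)
      (fun x => x ⟨(q, c'), h'⟩) := by
  fin_cases q <;> fin_cases c <;> fin_cases c' <;>
    first
    | exact absurd h (by decide)
    | exact absurd h' (by decide)
    | exact isMaximallyConnected_self (isDist_coupling hdist) _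
    | exact isMaximallyConnected_coupling_content0 hdist
    | exact (isMaximallyConnected_coupling_content0 hdist).symm
    | exact isMaximallyConnected_coupling_content1 hdist
    | exact (isMaximallyConnected_coupling_content1 hdist).symm

end TwoContentSystem

/-- Any system with exactly two contents `q₁, q₂` and three contexts — one context in which
both contents are measured, one in which only `q₁` is measured, and one in which only `q₂`
is measured — with finite value sets and arbitrary context distributions, is
CbD-noncontextual: it admits a multimaximally connected coupling. (In particular, every
factual–counterfactual subsystem of a cyclic system of rank 3 is noncontextual, so every
such system satisfies generalized counterfactual definiteness even when contextual.) -/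
theorem two_content_system_cbd_noncontextual
    (V : Fin 2 → Type) [∀ q, Fintype (V q)] [∀ q, DecidableEq (V q)]
    (μ : ∀ c : Fin 3, (∀ q : {q : Fin 2 // mea3 q c}, V q.1) → ℝ)
    (hdist : ∀ c, IsDist (μ c)) :
    CbDNoncontextual mea3 V μ := by
  have hcoupling := TwoContentSystem.isCoupling_coupling hdist
  refine ⟨TwoContentSystem.coupling V μ, hcoupling, fun q c c' h h' => ?_⟩
  rw [hcoupling.margin_eval h, hcoupling.margin_eval h']
  exact (TwoContentSystem.isMaximallyConnected_coupling hdist q c c' h h').isGreatest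
    hcoupling.1
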